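/- arXiv:math/0203138 — 2 statements merged into one kernel-verified Lean document; each statement's English description precedes it below -/
import Mathlib

section
/- For integers 1 ≤ k ≤ n, the Gårding cone admits the characterization Γ_k^+ = {λ ∈ ℝ^n : σ_j(λ) > 0 for every 1 ≤ j ≤ k}. In particular, every λ ∈ Γ_k^+ satisfies σ_j(λ) > 0 for all 1 ≤ j ≤ k. -/
/-- The `k`-th elementary symmetric polynomial of `x : Fin n → ℝ`. -/
noncomputable def sigmaElem (n k : ℕ) (x : Fin n → ℝ) : ℝ :=
  ∑ s ∈ Finset.univ.powersetCard k, ∏ i ∈ s, x i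

/-- The Gårding cone `Γ_k^+ ⊆ ℝ^n`: the connected component of
`{σ_k > 0}` containing `(1, …, 1)`. -/
def GammaPlus (n k : ℕ) : Set (Fin n → ℝ) :=
  connectedComponentIn {x | 0 < sigmaElem n k x} (fun _ => 1)

open Polynomial

/-! ### Auxiliary polynomial machinery -/

/-- The monic polynomial whose roots are `-x i`. -/
noncomputable def garP (n : ℕ) (x : Fin n → ℝ) : ℝ[X] := ∏ i : Fin n, (X + C (x i))

lemma sigmaElem_zero (n : ℕ) (x : Fin n → ℝ) : sigmaElem n 0 x = 1 := by
  simp [sigmaElem]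

lemma garP_coeff (n j : ℕ) (hj : j ≤ n) (x : Fin n → ℝ) :
    (garP n x).coeff (n - j) = sigmaElem n j x := by
  have h : n - j ≤ Finset.univ.card (α := Fin n) := by simp [Nat.sub_le]
  rw [garP, Finset.prod_X_add_C_coeff _ _ h, sigmaElem]
  congr 1
  simp [Nat.sub_sub_self hj]

lemma garP_natDegree (n : ℕ) (x : Fin n → ℝ) : (garP n x).natDegree = n := by
  rw [garP, natDegree_prod]
  · simp
  · intro i _; exact X_add_C_ne_zero (x i)

lemma garP_roots_card (n : ℕ) (x : Fin n → ℝ) :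
    Multiset.card (garP n x).roots = n := by
  have : garP n x = ((Finset.univ.val.map (fun i : Fin n => -x i)).map
      (fun a => X - C a)).prod := by
    rw [garP, Multiset.map_map, Finset.prod]
    congr 1
    apply Multiset.map_congr rfl
    intro i _
    simp [sub_neg_eq_add]
  rw [this, roots_multiset_prod_X_sub_C]
  simp

lemma taylor_garP (n : ℕ) (x : Fin n → ℝ) (t : ℝ) :
    taylor t (garP n x) = garP n (fun i => x i + t) := by
  rw [garP, garP, ← Polynomial.taylorAlgHom_apply, map_prod]
  refine Finset.prod_congr rfl fun i _ => ?_
  simp only [Polynomial.taylorAlgHom_apply, taylor_apply, add_comp, X_comp, C_comp, map_add]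
  ring

lemma eval_hasse_garP (n j : ℕ) (hj : j ≤ n) (x : Fin n → ℝ) (t : ℝ) :
    (hasseDeriv (n - j) (garP n x)).eval t = sigmaElem n j (fun i => x i + t) := by
  rw [← taylor_coeff, taylor_garP, garP_coeff n j hj]

lemma coeff_hasse_garP (n j i : ℕ) (hj : j ≤ n) (hi : i ≤ j) (x : Fin n → ℝ) :
    (hasseDeriv (n - j) (garP n x)).coeff i
      = ((i + (n - j)).choose (n - j) : ℝ) * sigmaElem n (j - i) x := by
  rw [hasseDeriv_coeff]
  congr 1
  have h : i + (n - j) = n - (j - i) := by omega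
  rw [h, garP_coeff n (j - i) (by omega)]

lemma deriv_hasse (d : ℕ) (p : ℝ[X]) :
    derivative (hasseDeriv d p) = (d+1) • hasseDeriv (d+1) p := by
  have h := congrFun (congrArg (fun f => f.toFun) (hasseDeriv_comp (R := ℝ) 1 d)) p
  simp only [LinearMap.coe_comp, Function.comp_apply, hasseDeriv_one, LinearMap.smul_apply,
    Nat.choose_one_right, Nat.add_comm 1 d] at h
  exact h

/-- Iterated Rolle: each Hasse derivative of a real-rooted polynomial is real-rooted. -/
lemma roots_hasse (p : ℝ[X]) (n : ℕ) (hdeg : p.natDegree = n)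
    (hroots : Multiset.card p.roots = n) (d : ℕ) :
    Multiset.card (hasseDeriv d p).roots = n - d := by
  induction d with
  | zero => simpa [hasseDeriv_zero'] using hroots
  | succ d ih =>
    have hle : Multiset.card (hasseDeriv (d+1) p).roots ≤ n - (d+1) := by
      have := (hasseDeriv (d+1) p).card_roots'
      rwa [natDegree_hasseDeriv, hdeg] at this
    have hge : n - (d+1) ≤ Multiset.card (hasseDeriv (d+1) p).roots := by
      have h1 := (hasseDeriv d p).card_roots_le_derivative
      rw [deriv_hasse, ih] at h1
      have hsm : ((d+1 : ℕ) • hasseDeriv (d+1) p).roots = (hasseDeriv (d+1) p).roots := by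
        rw [← Nat.cast_smul_eq_nsmul ℝ, smul_eq_C_mul, roots_C_mul]
        positivity
      rw [hsm] at h1
      omega
    omega

lemma eval_pos_of_coeff (f : ℝ[X]) (h0 : 0 < f.coeff 0) (h : ∀ i, 0 ≤ f.coeff i)
    {t : ℝ} (ht : 0 ≤ t) : 0 < f.eval t := by
  rw [eval_eq_sum_range]
  refine Finset.sum_pos' (fun i _ => mul_nonneg (h i) (pow_nonneg ht i)) ?_
  exact ⟨0, by simp [h0]⟩

lemma multiset_prod_pos (s : Multiset ℝ) (h : ∀ a ∈ s, 0 < a) : 0 < s.prod := by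
  induction s using Multiset.induction_on with
  | empty => simp
  | cons a s ih =>
    rw [Multiset.prod_cons]
    exact mul_pos (h a (Multiset.mem_cons_self a s))
      (ih fun b hb => h b (Multiset.mem_cons_of_mem hb))

lemma multiset_sum_pos (s : Multiset ℝ) (h : ∀ a ∈ s, 0 < a) (hne : s ≠ 0) : 0 < s.sum := by
  induction s using Multiset.induction_on with
  | empty => simp at hne
  | cons a s ih =>
    rw [Multiset.sum_cons]
    have ha := h a (Multiset.mem_cons_self a s)
    have hs : 0 ≤ s.sum :=
      Multiset.sum_nonneg fun b hb => (h b (Multiset.mem_cons_of_mem hb)).le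
    linarith

lemma esymm_pos (s : Multiset ℝ) (hs : ∀ a ∈ s, 0 < a) (k : ℕ) (hk : k ≤ Multiset.card s) :
    0 < s.esymm k := by
  rw [Multiset.esymm]
  have hne : (s.powersetCard k) ≠ 0 := by
    intro h
    have := Multiset.card_powersetCard k s
    rw [h] at this
    simp only [Multiset.card_zero] at this
    exact absurd (Nat.choose_pos hk) (by omega)
  refine multiset_sum_pos _ (fun a ha => ?_) (by simpa using hne)
  rcases Multiset.mem_map.1 ha with ⟨t, ht, rfl⟩
  rcases Multiset.mem_powersetCard.1 ht with ⟨hts, _⟩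
  exact multiset_prod_pos t fun b hb => hs b (Multiset.mem_of_le hts hb)

/-- A real-rooted polynomial with positive leading coefficient and all roots negative
has positive linear coefficient. -/
lemma coeff_one_pos (f : ℝ[X]) (hc : Multiset.card f.roots = f.natDegree)
    (hd : 1 ≤ f.natDegree) (hl : 0 < f.leadingCoeff) (hr : ∀ r ∈ f.roots, r < 0) :
    0 < f.coeff 1 := by
  rw [Polynomial.coeff_eq_esymm_roots_of_card hc hd, mul_assoc]
  refine mul_pos hl ?_
  have h1 : ((f.roots.map Neg.neg).esymm (f.natDegree - 1))
      = (-1) ^ (f.natDegree - 1) * f.roots.esymm (f.natDegree - 1) :=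
    Multiset.esymm_neg _ _
  rw [← h1]
  refine esymm_pos _ (fun a ha => ?_) _ (by rw [Multiset.card_map, hc]; omega)
  rcases Multiset.mem_map.1 ha with ⟨r, hrm, rfl⟩
  simpa using hr r hrm

lemma coeff_hasse_nonneg (n j : ℕ) (hj : j ≤ n) (x : Fin n → ℝ)
    (h : ∀ i, 1 ≤ i → i ≤ j → 0 ≤ sigmaElem n i x) :
    ∀ i, 0 ≤ (hasseDeriv (n - j) (garP n x)).coeff i := by
  intro i
  rcases le_or_gt i j with hij | hij
  · rw [coeff_hasse_garP n j i hj hij]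
    refine mul_nonneg (by positivity) ?_
    rcases Nat.eq_zero_or_pos (j - i) with h0 | h0
    · rw [h0, sigmaElem_zero]; norm_num
    · exact h (j - i) h0 (by omega)
  · rw [coeff_eq_zero_of_natDegree_lt]
    rw [natDegree_hasseDeriv, garP_natDegree]
    omega

/-- Key lemma: if `σ_i ≥ 0` for `1 ≤ i ≤ m` and `σ_{m-1} = 0`, then `σ_m` cannot be positive. -/
lemma keyM (n m : ℕ) (x : Fin n → ℝ) (hm1 : 1 ≤ m) (hmn : m ≤ n)
    (hnn : ∀ i, 1 ≤ i → i ≤ m → 0 ≤ sigmaElem n i x)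
    (hz : sigmaElem n (m - 1) x = 0) : ¬ (0 < sigmaElem n m x) := by
  intro hpos
  set f := hasseDeriv (n - m) (garP n x) with hf
  have hdeg : f.natDegree = m := by
    rw [hf, natDegree_hasseDeriv, garP_natDegree]; omega
  have hc0 : f.coeff 0 = sigmaElem n m x := by
    rw [hf, coeff_hasse_garP n m 0 hmn (by omega)]
    simp
  have hnonneg : ∀ i, 0 ≤ f.coeff i := coeff_hasse_nonneg n m hmn x hnn
  have heval : ∀ t : ℝ, 0 ≤ t → 0 < f.eval t := fun t ht =>
    eval_pos_of_coeff f (by rw [hc0]; exact hpos) hnonneg ht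
  have hroots : Multiset.card f.roots = f.natDegree := by
    rw [hdeg, hf, roots_hasse (garP n x) n (garP_natDegree n x) (garP_roots_card n x)]
    omega
  have hlead : 0 < f.leadingCoeff := by
    rw [Polynomial.leadingCoeff, hdeg, hf, coeff_hasse_garP n m m hmn le_rfl]
    rw [Nat.sub_self, sigmaElem_zero, mul_one]
    have : m + (n - m) = n := by omega
    rw [this]
    exact_mod_cast Nat.choose_pos (by omega)
  have hneg : ∀ r ∈ f.roots, r < 0 := by
    intro r hrm
    by_contra hge
    push_neg at hge
    exact absurd (isRoot_of_mem_roots hrm).eq_zero (ne_of_gt (heval r hge))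
  have h1 : 0 < f.coeff 1 := coeff_one_pos f hroots (by omega) hlead hneg
  rw [hf, coeff_hasse_garP n m 1 hmn (by omega), hz, mul_zero] at h1
  exact lt_irrefl 0 h1

/-- Key lemma: nonnegativity of `σ_1,…,σ_k` together with positivity of `σ_k`
forces positivity of all of them. -/
lemma keyL (n k : ℕ) (hk : 1 ≤ k) (hkn : k ≤ n) (x : Fin n → ℝ)
    (h0 : ∀ j, 1 ≤ j → j ≤ k → 0 ≤ sigmaElem n j x) (hkpos : 0 < sigmaElem n k x) :
    ∀ j, 1 ≤ j → j ≤ k → 0 < sigmaElem n j x := by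
  have main : ∀ d, d ≤ k - 1 → 0 < sigmaElem n (k - d) x := by
    intro d
    induction d with
    | zero => intro _; simpa using hkpos
    | succ d ih =>
      intro hd
      have h1 := ih (by omega)
      have hge : 0 ≤ sigmaElem n (k - (d + 1)) x := h0 _ (by omega) (by omega)
      rcases hge.lt_or_eq with hlt | heq
      · exact hlt
      · exfalso
        refine keyM n (k - d) x (by omega) (by omega)
          (fun i hi1 hi2 => h0 i hi1 (by omega)) ?_ h1
        have : k - d - 1 = k - (d + 1) := by omega
        rw [this, ← heq]
  intro j hj1 hj2
  have := main (k - j) (by omega)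
  have hkj : k - (k - j) = j := by omega
  rwa [hkj] at this

/-- Positivity along the sliding path `x + t·𝟙`. -/
lemma pathPos (n k : ℕ) (hkn : k ≤ n) (x : Fin n → ℝ)
    (hS : ∀ j, 1 ≤ j → j ≤ k → 0 < sigmaElem n j x) {t : ℝ} (ht : 0 ≤ t) :
    ∀ j, 1 ≤ j → j ≤ k → 0 < sigmaElem n j (fun i => x i + t) := by
  intro j hj1 hj2
  have hjn : j ≤ n := le_trans hj2 hkn
  rw [← eval_hasse_garP n j hjn]
  refine eval_pos_of_coeff _ ?_
    (coeff_hasse_nonneg n j hjn x fun i hi1 hi2 => (hS i hi1 (le_trans hi2 hj2)).le) ht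
  rw [coeff_hasse_garP n j 0 hjn (by omega)]
  simpa using hS j hj1 hj2

lemma sigmaElem_continuous (n j : ℕ) : Continuous (sigmaElem n j) := by
  unfold sigmaElem
  exact continuous_finset_sum _ fun s _ => continuous_finset_prod _ fun i _ => continuous_apply i

lemma sigmaElem_one (n j : ℕ) : sigmaElem n j (fun _ => 1) = (n.choose j : ℝ) := by
  unfold sigmaElem
  simp [Finset.card_powersetCard]

lemma sigmaElem_pos_of_pos (n j : ℕ) (hj : j ≤ n) (x : Fin n → ℝ) (hx : ∀ i, 0 < x i) :
    0 < sigmaElem n j x := by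
  unfold sigmaElem
  refine Finset.sum_pos (fun s _ => Finset.prod_pos fun i _ => hx i) ?_
  exact Finset.powersetCard_nonempty.2 (by simpa using hj)

/-- `Γ_k^+ = {λ : σ_j(λ) > 0 for all 1 ≤ j ≤ k}`. -/
theorem gammaPlus_eq_inter (n k : ℕ) (hk : 1 ≤ k) (hkn : k ≤ n) :
    GammaPlus n k = {x : Fin n → ℝ | ∀ j, 1 ≤ j → j ≤ k → 0 < sigmaElem n j x} := by
  set U : Set (Fin n → ℝ) := {x | 0 < sigmaElem n k x} with hU
  set S : Set (Fin n → ℝ) := {x | ∀ j, 1 ≤ j → j ≤ k → 0 < sigmaElem n j x} with hSdef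
  have hSU : S ⊆ U := fun x hx => hx k hk le_rfl
  have hone_S : (fun _ => (1:ℝ)) ∈ S := by
    intro j hj1 hj2
    rw [sigmaElem_one]
    exact_mod_cast Nat.choose_pos (le_trans hj2 hkn)
  have hone_U : (fun _ => (1:ℝ)) ∈ U := hSU hone_S
  apply Set.Subset.antisymm
  · -- Γ ⊆ S
    set W : Set (Fin n → ℝ) := U ∩ (closure S)ᶜ with hW
    have hK_closed : IsClosed {y : Fin n → ℝ | ∀ j, 1 ≤ j → j ≤ k → 0 ≤ sigmaElem n j y} := by
      have heq : {y : Fin n → ℝ | ∀ j, 1 ≤ j → j ≤ k → 0 ≤ sigmaElem n j y}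
          = ⋂ j ∈ Set.Icc 1 k, {y | 0 ≤ sigmaElem n j y} := by
        ext y; simp [Set.mem_Icc]
      rw [heq]
      exact isClosed_biInter fun j _ =>
        isClosed_le continuous_const (sigmaElem_continuous n j)
    have hclS : closure S ⊆ {y : Fin n → ℝ | ∀ j, 1 ≤ j → j ≤ k → 0 ≤ sigmaElem n j y} :=
      closure_minimal (fun y hy j hj1 hj2 => (hy j hj1 hj2).le) hK_closed
    have hUS : U ⊆ S ∪ W := by
      intro y hy
      by_cases hyc : y ∈ closure S
      · exact Or.inl (keyL n k hk hkn y (hclS hyc) hy)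
      · exact Or.inr ⟨hy, hyc⟩
    have hS_open : IsOpen S := by
      have heq : S = ⋂ j ∈ Set.Icc 1 k, {y : Fin n → ℝ | 0 < sigmaElem n j y} := by
        ext y; simp [hSdef, Set.mem_Icc]
      rw [heq]
      exact (Set.finite_Icc 1 k).isOpen_biInter fun j _ =>
        isOpen_lt continuous_const (sigmaElem_continuous n j)
    have hW_open : IsOpen W :=
      (isOpen_lt continuous_const (sigmaElem_continuous n k)).inter isClosed_closure.isOpen_compl
    have hdisj : Disjoint S W :=
      Set.disjoint_left.2 fun y hyS hyW => hyW.2 (subset_closure hyS)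
    have hΓU : GammaPlus n k ⊆ U := connectedComponentIn_subset _ _
    have hΓ_pre : IsPreconnected (GammaPlus n k) := isPreconnected_connectedComponentIn
    refine hΓ_pre.subset_left_of_subset_union hS_open hW_open hdisj
      (fun y hy => hUS (hΓU hy)) ?_
    exact ⟨fun _ => 1, mem_connectedComponentIn hone_U, hone_S⟩
  · -- S ⊆ Γ
    intro x hx
    set T : ℝ := 1 + ∑ i, |x i| with hT
    have hT1 : (1:ℝ) ≤ T := by
      have : (0:ℝ) ≤ ∑ i, |x i| := Finset.sum_nonneg fun i _ => abs_nonneg _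
      linarith
    have hxT : ∀ i, 1 ≤ x i + T := by
      intro i
      have h1 : |x i| ≤ ∑ j, |x j| :=
        Finset.single_le_sum (fun j _ => abs_nonneg (x j)) (Finset.mem_univ i)
      have h2 : -x i ≤ |x i| := neg_le_abs _
      simp only [hT]
      linarith
    set A : Set (Fin n → ℝ) := (fun t => (fun i => x i + t)) '' Set.Icc (0:ℝ) T with hA
    set B : Set (Fin n → ℝ) := segment ℝ (fun i => x i + T) (fun _ => 1) with hB
    have hA_conn : IsConnected A := by
      refine (isConnected_Icc (by linarith)).image _ ?_
      exact (continuous_pi fun i => continuous_const.add continuous_id).continuousOn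
    have hB_conn : IsConnected B :=
      (convex_segment _ _).isConnected ⟨_, left_mem_segment ℝ _ _⟩
    have hAB : ((fun i => x i + T) : Fin n → ℝ) ∈ A ∩ B :=
      ⟨⟨T, ⟨by linarith, le_rfl⟩, rfl⟩, left_mem_segment ℝ _ _⟩
    have hC_conn : IsConnected (A ∪ B) :=
      hA_conn.union ⟨_, hAB⟩ hB_conn
    have hCU : A ∪ B ⊆ U := by
      rintro y (hy | hy)
      · rcases hy with ⟨t, ⟨ht0, _⟩, rfl⟩
        exact pathPos n k hkn x hx ht0 k hk le_rfl
      · rcases hy with ⟨a, b, ha, hb, hab, rfl⟩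
        refine sigmaElem_pos_of_pos n k hkn _ fun i => ?_
        have h1 := hxT i
        simp only [Pi.add_apply, Pi.smul_apply, smul_eq_mul]
        nlinarith
    have hx_mem : x ∈ A ∪ B := by
      left
      exact ⟨0, ⟨le_rfl, by linarith⟩, by funext i; simp⟩
    have hone_mem : (fun _ => (1:ℝ)) ∈ A ∪ B := Or.inr (right_mem_segment ℝ _ _)
    exact hC_conn.isPreconnected.subset_connectedComponentIn hone_mem hCU hx_mem
end

section
/- Let n ≥ 3 and 2 ≤ k ≤ n, and set δ_k = (2k−n)(n−1)/(2nk−2k−n) and Λ_0 = (1,1,…,1,δ_k) ∈ ℝ^n. Then σ_k(A_{Λ_0}) = 0 and σ_j(A_{Λ_0}) > 0 for every 1 ≤ j ≤ k−1; consequently A_{Λ_0} ∈ Γ̄_k^+. Moreover min_i (Λ_0)_i = δ_k = ((2k−n)/(2n(k−1))) · σ_1(Λ_0), so the constant (2k−n)/(2n(k−1)) in the inequality min_i λ_i ≥ ((2k−n)/(2n(k−1)))·σ_1(Λ) for A_Λ ∈ Γ̄_k^+ is optimal. -/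
noncomputable def ALam (n : ℕ) (Λ : Fin n → ℝ) : Fin n → ℝ :=
  fun i => Λ i - (∑ j, Λ j) / (2 * ((n : ℝ) - 1))

open Finset Function

namespace Multiset

variable {R : Type*} [CommSemiring R]

theorem esymm_cons_succ (a : R) (s : Multiset R) (m : ℕ) :
    (a ::ₘ s).esymm (m + 1) = s.esymm (m + 1) + a * s.esymm m := by
  simp [esymm, map_map, sum_map_mul_left]

theorem esymm_replicate (N m : ℕ) (a : R) : (replicate N a).esymm m = N.choose m * a ^ m := by
  have hrep : replicate N a = (Finset.range N).val.map fun _ => a := by simp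
  rw [hrep, Finset.esymm_map_val, Finset.sum_congr rfl fun t ht => by
      rw [Finset.prod_const, (Finset.mem_powersetCard.1 ht).2],
    Finset.sum_const, Finset.card_powersetCard, Finset.card_range, nsmul_eq_mul]

end Multiset

theorem Finset.univ_val_map_update_const {ι β : Type*} [Fintype ι] [DecidableEq ι] (i₀ : ι)
    (a y : β) :
    univ.val.map (update (fun _ => a) i₀ y) = y ::ₘ Multiset.replicate (Fintype.card ι - 1) a := by
  rw [← Multiset.cons_erase (mem_univ_val i₀), Multiset.map_cons, update_self, ← erase_val]
  congr 1
  refine Multiset.eq_replicate.2 ⟨by simp, ?_⟩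
  simp only [Multiset.mem_map, mem_val, mem_erase]
  rintro _ ⟨i, ⟨hi, -⟩, rfl⟩
  exact update_of_ne hi _ _

theorem Nat.cast_choose_succ_mul {R : Type*} [CommRing R] (N m : ℕ) :
    (N.choose (m + 1) : R) * (m + 1) = N.choose m * (N - m) := by
  rcases le_or_gt m N with hm | hm
  · simpa [Nat.cast_sub hm] using congrArg (Nat.cast : ℕ → R) (Nat.choose_succ_right_eq N m)
  · simp [Nat.choose_eq_zero_of_lt hm, Nat.choose_eq_zero_of_lt (Nat.lt_succ_of_lt hm)]

theorem sigmaElem_eq_esymm (n k : ℕ) (x : Fin n → ℝ) :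
    sigmaElem n k x = (univ.val.map x).esymm k :=
  (Finset.esymm_map_val x univ k).symm

section TwoValued

variable {n : ℕ} (i₀ : Fin n)

theorem sum_update_const (a y : ℝ) : ∑ i, update (fun _ => a) i₀ y i = y + (n - 1) * a := by
  rw [sum_eq_multiset_sum, univ_val_map_update_const, Multiset.sum_cons,
    Multiset.sum_replicate, Fintype.card_fin, nsmul_eq_mul, Nat.cast_pred i₀.pos]

theorem ALam_update_const (a y : ℝ) :
    ALam n (update (fun _ => a) i₀ y) =
      update (fun _ => a - (y + (n - 1) * a) / (2 * (n - 1))) i₀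
        (y - (y + (n - 1) * a) / (2 * (n - 1))) := by
  ext i
  rcases eq_or_ne i i₀ with rfl | hi
  · simp [ALam, sum_update_const]
  · simp [ALam, sum_update_const, hi]

theorem sigmaElem_update_const (m : ℕ) (a y : ℝ) :
    sigmaElem n (m + 1) (update (fun _ => a) i₀ y) =
      a ^ m * ((n - 1).choose (m + 1) * a + (n - 1).choose m * y) := by
  rw [sigmaElem_eq_esymm, univ_val_map_update_const, Multiset.esymm_cons_succ,
    Multiset.esymm_replicate, Multiset.esymm_replicate, Fintype.card_fin]
  ring

theorem sigmaElem_update_const_mul {k : ℕ} {a b : ℝ} (hab : k * b = (k - n) * a) (m : ℕ) :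
    (m + 1) * k * sigmaElem n (m + 1) (update (fun _ => a) i₀ b) =
      n * (n - 1).choose m * (k - (m + 1)) * a ^ (m + 1) := by
  have hchoose := Nat.cast_choose_succ_mul (R := ℝ) (n - 1) m
  rw [Nat.cast_pred i₀.pos] at hchoose
  rw [sigmaElem_update_const]
  linear_combination (k * a ^ (m + 1)) * hchoose + ((m + 1) * (n - 1).choose m * a ^ m) * hab

theorem sigmaElem_update_const_eq_zero {k : ℕ} (hk : k ≠ 0) {a b : ℝ}
    (hab : k * b = (k - n) * a) : sigmaElem n k (update (fun _ => a) i₀ b) = 0 := by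
  obtain ⟨m, rfl⟩ := Nat.exists_eq_succ_of_ne_zero hk
  have h := sigmaElem_update_const_mul i₀ hab m
  push_cast at h
  rw [sub_self, mul_zero, zero_mul] at h
  exact (mul_eq_zero.1 h).resolve_left (by positivity)

theorem sigmaElem_update_const_pos {k j : ℕ} (hj : j ≠ 0) (hjk : j < k) (hjn : j ≤ n) {a b : ℝ}
    (ha : 0 < a) (hab : k * b = (k - n) * a) :
    0 < sigmaElem n j (update (fun _ => a) i₀ b) := by
  obtain ⟨m, rfl⟩ := Nat.exists_eq_succ_of_ne_zero hj
  have h := sigmaElem_update_const_mul i₀ hab m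
  have hchoose : (0 : ℝ) < (n - 1).choose m := mod_cast Nat.choose_pos (by omega)
  have hkm : ((m : ℝ) + 1) < k := mod_cast hjk
  have hrhs : 0 < (n : ℝ) * (n - 1).choose m * (k - (m + 1)) * a ^ (m + 1) := by
    have : (0 : ℝ) < n := mod_cast i₀.pos
    have : (0 : ℝ) < k - (m + 1) := by linarith
    positivity
  exact pos_of_mul_pos_right (h ▸ hrhs) (by positivity)

end TwoValued

theorem mem_closure_connectedComponentIn_of_lineMap {E : Type*} [AddCommGroup E] [Module ℝ E]
    [TopologicalSpace E] [IsTopologicalAddGroup E] [ContinuousSMul ℝ E] {S : Set E} {p x : E}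
    (h : ∀ t ∈ Set.Ico (0 : ℝ) 1, AffineMap.lineMap p x t ∈ S) :
    x ∈ closure (connectedComponentIn S p) := by
  set γ : ℝ → E := ⇑(AffineMap.lineMap (k := ℝ) p x)
  have hγ : Continuous γ := AffineMap.lineMap_continuous
  have hsub : γ '' Set.Ico 0 1 ⊆ connectedComponentIn S p :=
    (isPreconnected_Ico.image γ hγ.continuousOn).subset_connectedComponentIn
      ⟨0, by simp, AffineMap.lineMap_apply_zero p x⟩ (Set.image_subset_iff.2 h)
  have hx : x ∈ γ '' closure (Set.Ico 0 1) :=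
    ⟨1, by simp [closure_Ico zero_ne_one], AffineMap.lineMap_apply_one p x⟩
  exact closure_mono hsub (image_closure_subset_closure_image hγ hx)

theorem update_const_mem_closure_gammaPlus {n k : ℕ} (i₀ : Fin n) (hk : k ≠ 0) (hkn : k ≤ n)
    {a b : ℝ} (ha : 0 < a) (hσ : sigmaElem n k (update (fun _ => a) i₀ b) = 0) :
    update (fun _ => a) i₀ b ∈ closure (GammaPlus n k) := by
  obtain ⟨m, rfl⟩ := Nat.exists_eq_succ_of_ne_zero hk
  set L : ℝ → ℝ → ℝ := fun c d => (n - 1).choose (m + 1) * c + (n - 1).choose m * d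
  have hL : L a b = 0 := by
    rw [sigmaElem_update_const] at hσ
    exact (mul_eq_zero.1 hσ).resolve_left (pow_ne_zero m ha.ne')
  have hchoose : (0 : ℝ) < (n - 1).choose m := mod_cast Nat.choose_pos (by omega)
  refine mem_closure_connectedComponentIn_of_lineMap fun t ⟨ht0, ht1⟩ => ?_
  have hpoint : AffineMap.lineMap (fun _ => 1) (update (fun _ => a) i₀ b) t =
      update (fun _ => (1 - t) + t * a) i₀ ((1 - t) + t * b) := by
    ext i
    rcases eq_or_ne i i₀ with rfl | hi
    · simp [AffineMap.lineMap_apply_module]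
    · simp [AffineMap.lineMap_apply_module, hi]
  have hLt : L ((1 - t) + t * a) ((1 - t) + t * b) = (1 - t) * L 1 1 + t * L a b := by ring
  have hL11 : 0 < L 1 1 := by positivity
  show 0 < sigmaElem n (m + 1) _
  rw [hpoint, sigmaElem_update_const]
  change 0 < _ ^ m * L _ _
  rw [hLt, hL, mul_zero, add_zero]
  have : 0 < 1 - t := by linarith
  have : 0 < (1 - t) + t * a := by nlinarith
  positivity

section OptimalDelta

variable {n k δ : ℝ} (hD : 2 * n * k - 2 * k - n ≠ 0)
  (hδ : δ = (2 * k - n) * (n - 1) / (2 * n * k - 2 * k - n))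
include hD hδ

theorem delta_add_eq : δ + (n - 1) = 2 * n * (n - 1) * (k - 1) / (2 * n * k - 2 * k - n) := by
  rw [hδ, div_add' _ _ _ hD, div_left_inj' hD]
  ring

theorem delta_add_div_eq (hn1 : n - 1 ≠ 0) :
    (δ + (n - 1)) / (2 * (n - 1)) = n * (k - 1) / (2 * n * k - 2 * k - n) := by
  rw [delta_add_eq hD hδ]
  field_simp

theorem delta_eq_mul_delta_add (hn : n ≠ 0) (hk : k - 1 ≠ 0) :
    δ = (2 * k - n) / (2 * n * (k - 1)) * (δ + (n - 1)) := by
  rw [delta_add_eq hD hδ, hδ]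
  field_simp

end OptimalDelta

theorem delta_le_one {n k δ : ℝ} (hn : 2 ≤ n) (hD : 0 < 2 * n * k - 2 * k - n)
    (hδ : δ = (2 * k - n) * (n - 1) / (2 * n * k - 2 * k - n)) : δ ≤ 1 := by
  rw [hδ, div_le_one hD]
  nlinarith

theorem ALam_update_one_delta {n : ℕ} (i₀ : Fin n) {k δ : ℝ} (hD : 2 * n * k - 2 * k - n ≠ 0)
    (hδ : δ = (2 * k - n) * (n - 1) / (2 * n * k - 2 * k - n)) (hn1 : (n : ℝ) - 1 ≠ 0) :
    ALam n (update (fun _ => 1) i₀ δ) =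
      update (fun _ => k * (n - 2) / (2 * n * k - 2 * k - n)) i₀
        ((n - 2) * (k - n) / (2 * n * k - 2 * k - n)) := by
  rw [ALam_update_const, mul_one, delta_add_div_eq hD hδ hn1, hδ]
  congr 2
  · ext
    rw [eq_div_iff hD, sub_mul, div_mul_cancel₀ _ hD]
    ring
  · rw [div_sub_div_same]
    ring

/-- with `δ_k = (2k−n)(n−1)/(2nk−2k−n)` and `Λ_0 = (1,…,1,δ_k)`,
one has `σ_k(A_{Λ_0}) = 0`, `σ_j(A_{Λ_0}) > 0` for `1 ≤ j ≤ k−1`, hence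
`A_{Λ_0} ∈ Γ̄_k^+`; moreover `min_i (Λ_0)_i = δ_k = ((2k−n)/(2n(k−1)))·σ_1(Λ_0)`,
showing that the constant in Lemma 1 is optimal. -/
theorem optimal_constant (n k : ℕ) (hn : 3 ≤ n) (hk : 2 ≤ k) (hkn : k ≤ n)
    (δ : ℝ) (hδ : δ = (2 * (k : ℝ) - n) * ((n : ℝ) - 1) / (2 * n * k - 2 * k - n))
    (Λ₀ : Fin n → ℝ) (hΛ₀ : Λ₀ = fun i : Fin n => if (i : ℕ) = n - 1 then δ else 1) :
    sigmaElem n k (ALam n Λ₀) = 0 ∧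
    (∀ j, 1 ≤ j → j ≤ k - 1 → 0 < sigmaElem n j (ALam n Λ₀)) ∧
    ALam n Λ₀ ∈ closure (GammaPlus n k) ∧
    (∀ i, δ ≤ Λ₀ i) ∧ (∃ i, Λ₀ i = δ) ∧
    δ = (2 * (k : ℝ) - n) / (2 * n * ((k : ℝ) - 1)) * ∑ i, Λ₀ i := by
  have hnR : (3 : ℝ) ≤ n := mod_cast hn
  have hkR : (2 : ℝ) ≤ k := mod_cast hk
  have hD : (0 : ℝ) < 2 * n * k - 2 * k - n := by nlinarith
  set i₀ : Fin n := ⟨n - 1, by omega⟩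
  have hΛ : Λ₀ = update (fun _ => 1) i₀ δ := by
    subst hΛ₀
    ext i
    simp [update_apply, Fin.ext_iff, i₀]
  have hA := ALam_update_one_delta i₀ hD.ne' hδ (by linarith)
  set a : ℝ := k * (n - 2) / (2 * n * k - 2 * k - n)
  set b : ℝ := (n - 2) * (k - n) / (2 * n * k - 2 * k - n)
  have ha : 0 < a := div_pos (mul_pos (by linarith) (by linarith)) hD
  have hab : k * b = (k - n) * a := by ring
  have hσk : sigmaElem n k (ALam n Λ₀) = 0 := by
    rw [hΛ, hA]
    exact sigmaElem_update_const_eq_zero i₀ (by omega) hab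
  refine ⟨hσk, fun j hj hjk => ?_, ?_, fun i => ?_, ⟨i₀, by simp [hΛ]⟩, ?_⟩
  · rw [hΛ, hA]
    exact sigmaElem_update_const_pos i₀ (by omega) (by omega) (by omega) ha hab
  · rw [hΛ, hA] at hσk ⊢
    exact update_const_mem_closure_gammaPlus i₀ (by omega) hkn ha hσk
  · rcases eq_or_ne i i₀ with rfl | hi
    · simp [hΛ]
    · simpa [hΛ, hi] using delta_le_one (by linarith) hD hδ
  · rw [hΛ, sum_update_const, mul_one]
    exact delta_eq_mul_delta_add hD.ne' hδ (by positivity) (by linarith)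
end
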